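/- arXiv:2202.04679 — 2 statements merged into one kernel-verified Lean document; each statement's English description precedes it below -/
import Mathlib

section
/- Consider the one-step finite-volume scheme for the aggregate volume fraction described in the context. Fix a time level n and cell values φ_{i-1/2}^n ∈ [0,1] for i = 1,…,N. Then for every cell index i ∈ {1,…,N}, if the CFL condition holds, the update map (a,b,c) ↦ b + (λ/A_{i-1/2}) ( a Q_{i-1}^{n+} + b Q_{i-1}^{n-} + A_{i-1}γ_{i-1} [ a ṽ(b) − (D(b) − D(a))/Δz ] − b Q_i^{n+} − c Q_i^{n-} − A_iγ_i [ b ṽ(c) − (D(c) − D(b))/Δz ] + Q_F^n φ_F^n δ_i ) is nondecreasing in each of the three arguments a, b, c on the cube [0,1]^3. In other words, the aggregate scheme is a monotone scheme under the CFL condition. -/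
/-!
Raising `a` or `c` only moves flux into the cell, because `ṽ ≥ 0` is nonincreasing and `D` is
nondecreasing. Raising `b` by `e ≥ 0` changes the update by `e` minus an outflow increment of at
most `μ e (max Q_i 0 - min Q_{i-1} 0 + B L_ṽ + C ‖ṽ‖_∞ + (B + C) ‖d‖_∞ / Δz)`, where
`μ = λ / A_{i-1/2}`, `B = A_{i-1} γ_{i-1}`, `C = A_i γ_i` and `D` is `‖d‖_∞`-Lipschitz;
the CFL condition makes this coefficient of `e` at most one.
-/

open Set MeasureTheory

theorem intervalIntegrable_of_norm_le {d : ℝ → ℝ} {M x y : ℝ} (hdm : Measurable d)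
    (hb : ∀ s ∈ uIcc x y, ‖d s‖ ≤ M) : IntervalIntegrable d volume x y :=
  intervalIntegrable_const.mono_fun' hdm.aestronglyMeasurable
    (ae_restrict_of_forall_mem measurableSet_uIoc fun s hs => hb s (uIoc_subset_uIcc hs))

theorem primitive_sub_mem_Icc {d D : ℝ → ℝ} {M : ℝ} (hdm : Measurable d)
    (hd : ∀ s ∈ Icc (0 : ℝ) 1, 0 ≤ d s ∧ d s ≤ M) (hD : ∀ x, D x = ∫ s in (0 : ℝ)..x, d s)
    {x y : ℝ} (hx : x ∈ Icc (0 : ℝ) 1) (hy : y ∈ Icc (0 : ℝ) 1) (hxy : x ≤ y) :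
    D y - D x ∈ Icc 0 (M * (y - x)) := by
  have hd' : ∀ {l u}, l ∈ Icc (0 : ℝ) 1 → u ∈ Icc (0 : ℝ) 1 → ∀ s ∈ uIcc l u, 0 ≤ d s ∧ d s ≤ M :=
    fun hl hu s hs => hd s (Icc_subset_Icc (le_min hl.1 hu.1) (max_le hl.2 hu.2) hs)
  have hint : ∀ {l u}, l ∈ Icc (0 : ℝ) 1 → u ∈ Icc (0 : ℝ) 1 → IntervalIntegrable d volume l u :=
    fun hl hu => intervalIntegrable_of_norm_le hdm fun s hs => by
      rw [Real.norm_of_nonneg (hd' hl hu s hs).1]; exact (hd' hl hu s hs).2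
  have h0 : (0 : ℝ) ∈ Icc (0 : ℝ) 1 := ⟨le_rfl, zero_le_one⟩
  have hsub : D y - D x = ∫ s in x..y, d s := by
    rw [hD, hD]; exact intervalIntegral.integral_interval_sub_left (hint h0 hy) (hint h0 hx)
  have hIcc : ∀ s ∈ Icc x y, 0 ≤ d s ∧ d s ≤ M := fun s hs => hd' hx hy s (Icc_subset_uIcc hs)
  rw [hsub]
  refine ⟨intervalIntegral.integral_nonneg hxy fun s hs => (hIcc s hs).1, ?_⟩
  calc ∫ s in x..y, d s ≤ ∫ _ in x..y, M :=
        intervalIntegral.integral_mono_on hxy (hint hx hy) intervalIntegrable_const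
          fun s hs => (hIcc s hs).2
    _ = M * (y - x) := by rw [intervalIntegral.integral_const, smul_eq_mul, mul_comm]

/-- The update of one cell: `μ = λ / A_{i-1/2}`, `qL = Q_{i-1}`, `qR = Q_i`, `B = A_{i-1} γ_{i-1}`,
`C = A_i γ_i` and `S = Q_F φ_F δ_i`. -/
noncomputable def cellUpdate (μ Δz qL qR B C S : ℝ) (v D : ℝ → ℝ) (a b c : ℝ) : ℝ :=
  b + μ * (a * max qL 0 + b * min qL 0 + B * (a * v b - (D b - D a) / Δz)
    - b * max qR 0 - c * min qR 0 - C * (b * v c - (D c - D b) / Δz) + S)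

section cellUpdate

variable {μ Δz qL qR B C S : ℝ} {v D : ℝ → ℝ} {s : Set ℝ}

theorem cellUpdate_le_cellUpdate_left (hμ : 0 ≤ μ) (hΔz : 0 < Δz) (hB : 0 ≤ B)
    (hD : MonotoneOn D s) {a₁ a₂ b c : ℝ} (ha₁ : a₁ ∈ s) (ha₂ : a₂ ∈ s) (hvb : 0 ≤ v b)
    (ha : a₁ ≤ a₂) :
    cellUpdate μ Δz qL qR B C S v D a₁ b c ≤ cellUpdate μ Δz qL qR B C S v D a₂ b c := by
  have hdiff : cellUpdate μ Δz qL qR B C S v D a₂ b c - cellUpdate μ Δz qL qR B C S v D a₁ b c =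
      μ * ((a₂ - a₁) * max qL 0 + B * ((a₂ - a₁) * v b + (D a₂ - D a₁) / Δz)) := by
    unfold cellUpdate; ring
  have hDa : 0 ≤ D a₂ - D a₁ := sub_nonneg.2 (hD ha₁ ha₂ ha)
  have hea : 0 ≤ a₂ - a₁ := sub_nonneg.2 ha
  refine sub_nonneg.1 (hdiff ▸ mul_nonneg hμ (add_nonneg ?_ (mul_nonneg hB ?_)))
  · exact mul_nonneg hea (le_max_right _ _)
  · exact add_nonneg (mul_nonneg hea hvb) (div_nonneg hDa hΔz.le)

theorem cellUpdate_le_cellUpdate_right (hμ : 0 ≤ μ) (hΔz : 0 < Δz) (hC : 0 ≤ C)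
    (hv : AntitoneOn v s) (hD : MonotoneOn D s) {a b c₁ c₂ : ℝ} (hb : 0 ≤ b) (hc₁ : c₁ ∈ s)
    (hc₂ : c₂ ∈ s) (hc : c₁ ≤ c₂) :
    cellUpdate μ Δz qL qR B C S v D a b c₁ ≤ cellUpdate μ Δz qL qR B C S v D a b c₂ := by
  have hdiff : cellUpdate μ Δz qL qR B C S v D a b c₂ - cellUpdate μ Δz qL qR B C S v D a b c₁ =
      μ * ((c₂ - c₁) * -min qR 0 + C * (b * (v c₁ - v c₂) + (D c₂ - D c₁) / Δz)) := by
    unfold cellUpdate; ring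
  have hvc : 0 ≤ v c₁ - v c₂ := sub_nonneg.2 (hv hc₁ hc₂ hc)
  have hDc : 0 ≤ D c₂ - D c₁ := sub_nonneg.2 (hD hc₁ hc₂ hc)
  refine sub_nonneg.1 (hdiff ▸ mul_nonneg hμ (add_nonneg ?_ (mul_nonneg hC ?_)))
  · exact mul_nonneg (sub_nonneg.2 hc) (neg_nonneg.2 (min_le_right _ _))
  · exact add_nonneg (mul_nonneg hb hvc) (div_nonneg hDc hΔz.le)

theorem cellUpdate_le_cellUpdate_mid {Lv vmax dmax : ℝ} (hμ : 0 ≤ μ) (hΔz : 0 < Δz)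
    (hB : 0 ≤ B) (hC : 0 ≤ C)
    (hvlip : ∀ u₁ ∈ s, ∀ u₂ ∈ s, |v u₁ - v u₂| ≤ Lv * |u₁ - u₂|)
    (hDlip : ∀ x ∈ s, ∀ y ∈ s, x ≤ y → D y - D x ≤ dmax * (y - x))
    (hCFL : μ * (max qR 0 - min qL 0 + B * Lv + C * vmax + (B + C) * dmax / Δz) ≤ 1)
    {a b₁ b₂ c : ℝ} (ha : a ∈ Icc (0 : ℝ) 1) (hb₁ : b₁ ∈ s) (hb₂ : b₂ ∈ s) (hvc : v c ≤ vmax)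
    (hb : b₁ ≤ b₂) :
    cellUpdate μ Δz qL qR B C S v D a b₁ c ≤ cellUpdate μ Δz qL qR B C S v D a b₂ c := by
  set e := b₂ - b₁
  set w := v b₂ - v b₁
  have he : 0 ≤ e := sub_nonneg.2 hb
  have hdiff : cellUpdate μ Δz qL qR B C S v D a b₂ c - cellUpdate μ Δz qL qR B C S v D a b₁ c =
      e * (1 - μ * (max qR 0 - min qL 0 + B * Lv + C * vmax + (B + C) * dmax / Δz))
        + μ * (C * (e * (vmax - v c)) + B * (a * w + Lv * e)
          + (B + C) * ((dmax * e - (D b₂ - D b₁)) / Δz)) := by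
    unfold cellUpdate; ring
  have hw : |w| ≤ Lv * e := by
    simpa [w, e, abs_of_nonneg he] using hvlip b₂ hb₂ b₁ hb₁
  have haw : 0 ≤ a * w + Lv * e := by
    nlinarith [mul_nonneg ha.1 (neg_le_iff_add_nonneg.1 (abs_le.1 hw).1),
      mul_nonneg (sub_nonneg.2 ha.2) ((abs_nonneg w).trans hw)]
  have hDb : 0 ≤ dmax * e - (D b₂ - D b₁) := sub_nonneg.2 (hDlip b₁ hb₁ b₂ hb₂ hb)
  refine sub_nonneg.1 (hdiff ▸ add_nonneg (mul_nonneg he (sub_nonneg.2 hCFL)) ?_)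
  exact mul_nonneg hμ (add_nonneg (add_nonneg (mul_nonneg hC (mul_nonneg he (sub_nonneg.2 hvc)))
    (mul_nonneg hB haw)) (mul_nonneg (add_nonneg hB hC) (div_nonneg hDb hΔz.le)))

end cellUpdate

theorem boundaryFlow_mem_Icc {N iF : ℕ} {QUn QFn QWn Qbound : ℝ} {Q : ℕ → ℝ}
    (hQU : 0 ≤ QUn) (hQF : 0 ≤ QFn) (hQW : 0 ≤ QWn) (hQE : 0 ≤ QFn + QWn - QUn)
    (hQlow : ∀ i : ℕ, i ≤ iF - 1 → Q i = -QUn)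
    (hQmid : ∀ i : ℕ, iF ≤ i → i ≤ N - 2 → Q i = QFn - QUn)
    (hQtop : ∀ i : ℕ, N - 1 ≤ i → i ≤ N → Q i = QFn + QWn - QUn)
    (hQbound : QFn + QWn ≤ Qbound) {j : ℕ} (hj : j ≤ N) : Q j ∈ Icc (-Qbound) Qbound := by
  rcases lt_or_ge j iF with hlow | hF
  · rw [hQlow j (by omega)]; constructor <;> linarith
  rcases lt_or_ge j (N - 1) with hmid | htop
  · rw [hQmid j hF (by omega)]; constructor <;> linarith
  · rw [hQtop j htop hj]; constructor <;> linarith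

theorem cellCFL_of_CFL {Δz Δt A AL AR Amin Qbound qL qR B C M1 M2 Lv vmax dmax : ℝ}
    (hΔz : 0 < Δz) (hΔt : 0 ≤ Δt) (hAmin : 0 < Amin) (hA : Amin ≤ A)
    (hqL : qL ∈ Icc (-Qbound) Qbound) (hqR : qR ∈ Icc (-Qbound) Qbound) (hBL : B ≤ AL) (hCR : C ≤ AR) (hM1 : AL / A ≤ M1 ∧ AR / A ≤ M1)
    (hM2 : (AL + AR) / A ≤ M2) (hLv : 0 ≤ Lv) (hvmax : 0 ≤ vmax) (hdmax : 0 ≤ dmax)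
    (hCFL : Δt * (2 * Qbound / Amin + M1 * Lv + M1 * vmax + M2 * dmax / Δz) ≤ Δz) :
    Δt / Δz / A * (max qR 0 - min qL 0 + B * Lv + C * vmax + (B + C) * dmax / Δz) ≤ 1 := by
  set F := max qR 0 - min qL 0
  have hQ : 0 ≤ Qbound := by linarith [hqR.1, hqR.2]
  have hF : F ≤ 2 * Qbound := by linarith [max_le hqR.2 hQ, le_min hqL.1 (neg_nonpos.2 hQ)]
  have hA0 : 0 < A := hAmin.trans_le hA
  have hB := hBL.trans ((div_le_iff₀ hA0).1 hM1.1)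
  have hC := hCR.trans ((div_le_iff₀ hA0).1 hM1.2)
  have hBC := (add_le_add hBL hCR).trans ((div_le_iff₀ hA0).1 hM2)
  have hFA : F ≤ A * (2 * Qbound / Amin) := by
    rw [mul_div_assoc', le_div_iff₀ hAmin]; nlinarith
  have hsum : F + B * Lv + C * vmax + (B + C) * dmax / Δz
      ≤ A * (2 * Qbound / Amin + M1 * Lv + M1 * vmax + M2 * dmax / Δz) := by
    have hBLv := mul_le_mul_of_nonneg_right hB hLv
    have hCv := mul_le_mul_of_nonneg_right hC hvmax
    have hBCd := div_le_div_of_nonneg_right (mul_le_mul_of_nonneg_right hBC hdmax) hΔz.le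
    have hAd : A * (M2 * dmax / Δz) = M2 * A * dmax / Δz := by ring
    linarith
  calc Δt / Δz / A * (F + B * Lv + C * vmax + (B + C) * dmax / Δz)
      ≤ Δt / Δz / A * (A * (2 * Qbound / Amin + M1 * Lv + M1 * vmax + M2 * dmax / Δz)) :=
        mul_le_mul_of_nonneg_left hsum (by positivity)
    _ = Δt * (2 * Qbound / Amin + M1 * Lv + M1 * vmax + M2 * dmax / Δz) / Δz := by
        field_simp
    _ ≤ 1 := (div_le_one hΔz).2 hCFL

/-- `Ac i` is the cell area `A_{i-1/2}` and `Ab i` the boundary area `A_i`. -/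
theorem stmt10_general
    (N iF : ℕ)
    (Δz Δt : ℝ) (hΔz : 0 < Δz) (hΔt : 0 < Δt)
    (Ac Ab : ℕ → ℝ)
    (hAc : ∀ i : ℕ, 1 ≤ i → i ≤ N → 0 < Ac i)
    (hAb : ∀ i : ℕ, i ≤ N → 0 < Ab i)
    (γ δ : ℕ → ℝ)
    (hγ : ∀ i : ℕ, γ i = if 1 ≤ i ∧ i ≤ N - 2 then 1 else 0)
    (QUn QFn QWn : ℝ)
    (hQU : 0 ≤ QUn) (hQF : 0 ≤ QFn) (hQW : 0 ≤ QWn)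
    (hQE : 0 ≤ QFn + QWn - QUn)
    (Q : ℕ → ℝ)
    (hQlow : ∀ i : ℕ, i ≤ iF - 1 → Q i = -QUn)
    (hQmid : ∀ i : ℕ, iF ≤ i → i ≤ N - 2 → Q i = QFn - QUn)
    (hQtop : ∀ i : ℕ, N - 1 ≤ i → i ≤ N → Q i = QFn + QWn - QUn)
    (v : ℝ → ℝ) (Lv vmax : ℝ)
    (hv0 : ∀ u ∈ Set.Icc (0:ℝ) 1, 0 ≤ v u)
    (hvmax : ∀ u ∈ Set.Icc (0:ℝ) 1, v u ≤ vmax)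
    (hvmono : ∀ u₁ ∈ Set.Icc (0:ℝ) 1, ∀ u₂ ∈ Set.Icc (0:ℝ) 1, u₁ ≤ u₂ → v u₂ ≤ v u₁)
    (hvlip : ∀ u₁ ∈ Set.Icc (0:ℝ) 1, ∀ u₂ ∈ Set.Icc (0:ℝ) 1,
      |v u₁ - v u₂| ≤ Lv * |u₁ - u₂|)
    (d : ℝ → ℝ) (dmax : ℝ) (hdmeas : Measurable d)
    (hd : ∀ s ∈ Set.Icc (0:ℝ) 1, 0 ≤ d s ∧ d s ≤ dmax)
    (D : ℝ → ℝ) (hD : ∀ x : ℝ, D x = ∫ s in (0:ℝ)..x, d s)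
    (M1 M2 Amin Qbound : ℝ)
    (hM1 : ∀ i : ℕ, 1 ≤ i → i ≤ N → Ab (i - 1) / Ac i ≤ M1 ∧ Ab i / Ac i ≤ M1)
    (hM2 : ∀ i : ℕ, 1 ≤ i → i ≤ N → (Ab (i - 1) + Ab i) / Ac i ≤ M2)
    (hAmin : 0 < Amin)
    (hAminc : ∀ i : ℕ, 1 ≤ i → i ≤ N → Amin ≤ Ac i)
    (hQbound : QFn + QWn ≤ Qbound)
    (hCFL : Δt * (2 * Qbound / Amin + M1 * Lv + M1 * vmax + M2 * dmax / Δz) ≤ Δz)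
    (φF : ℝ)
    (K : ℕ → ℝ → ℝ → ℝ → ℝ)
    (hK : ∀ (i : ℕ) (a b c : ℝ), K i a b c =
      b + (Δt / Δz) / Ac i *
        (a * max (Q (i - 1)) 0 + b * min (Q (i - 1)) 0
          + Ab (i - 1) * γ (i - 1) * (a * v b - (D b - D a) / Δz)
          - b * max (Q i) 0 - c * min (Q i) 0
          - Ab i * γ i * (b * v c - (D c - D b) / Δz)
          + QFn * φF * δ i)) :
    ∀ i : ℕ, 1 ≤ i → i ≤ N →
      (∀ b ∈ Set.Icc (0:ℝ) 1, ∀ c ∈ Set.Icc (0:ℝ) 1,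
        ∀ a₁ ∈ Set.Icc (0:ℝ) 1, ∀ a₂ ∈ Set.Icc (0:ℝ) 1,
          a₁ ≤ a₂ → K i a₁ b c ≤ K i a₂ b c) ∧
      (∀ a ∈ Set.Icc (0:ℝ) 1, ∀ c ∈ Set.Icc (0:ℝ) 1,
        ∀ b₁ ∈ Set.Icc (0:ℝ) 1, ∀ b₂ ∈ Set.Icc (0:ℝ) 1,
          b₁ ≤ b₂ → K i a b₁ c ≤ K i a b₂ c) ∧
      (∀ a ∈ Set.Icc (0:ℝ) 1, ∀ b ∈ Set.Icc (0:ℝ) 1,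
        ∀ c₁ ∈ Set.Icc (0:ℝ) 1, ∀ c₂ ∈ Set.Icc (0:ℝ) 1,
          c₁ ≤ c₂ → K i a b c₁ ≤ K i a b c₂) := by
  intro i hi1 hiN
  have hweight : ∀ j ≤ N, Ab j * γ j ∈ Icc 0 (Ab j) := fun j hj => by
    rw [hγ]; split_ifs <;> simp [(hAb j hj).le]
  have hB := hweight (i - 1) (by omega)
  have hC := hweight i hiN
  have hQL := boundaryFlow_mem_Icc hQU hQF hQW hQE hQlow hQmid hQtop hQbound (j := i - 1) (by omega)
  have hQR := boundaryFlow_mem_Icc hQU hQF hQW hQE hQlow hQmid hQtop hQbound hiN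
  have hI : (0 : ℝ) ∈ Icc 0 1 := ⟨le_rfl, zero_le_one⟩
  have hLv : 0 ≤ Lv := (abs_nonneg _).trans (by simpa using hvlip 0 hI 1 ⟨zero_le_one, le_rfl⟩)
  have hCFLi := cellCFL_of_CFL hΔz hΔt.le hAmin (hAminc i hi1 hiN) hQL hQR hB.2 hC.2
    (hM1 i hi1 hiN) (hM2 i hi1 hiN) hLv ((hv0 0 hI).trans (hvmax 0 hI))
    ((hd 0 hI).1.trans (hd 0 hI).2) hCFL
  have hDinc : ∀ x ∈ Icc (0 : ℝ) 1, ∀ y ∈ Icc (0 : ℝ) 1, x ≤ y →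
      D y - D x ∈ Icc 0 (dmax * (y - x)) :=
    fun _ hx _ hy => primitive_sub_mem_Icc hdmeas hd hD hx hy
  have hDmono : MonotoneOn D (Icc 0 1) := fun x hx y hy hxy => sub_nonneg.1 (hDinc x hx y hy hxy).1
  have hμ : 0 ≤ Δt / Δz / Ac i := div_nonneg (div_nonneg hΔt.le hΔz.le) (hAc i hi1 hiN).le
  have hK' : K i = cellUpdate (Δt / Δz / Ac i) Δz (Q (i - 1)) (Q i) (Ab (i - 1) * γ (i - 1))
      (Ab i * γ i) (QFn * φF * δ i) v D := by
    funext a b c; exact hK i a b c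
  rw [hK']
  refine ⟨fun b hb c _ a₁ ha₁ a₂ ha₂ h => ?_, fun a ha c hc b₁ hb₁ b₂ hb₂ h => ?_,
    fun a _ b hb c₁ hc₁ c₂ hc₂ h => ?_⟩
  · exact cellUpdate_le_cellUpdate_left hμ hΔz hB.1 hDmono ha₁ ha₂ (hv0 b hb) h
  · exact cellUpdate_le_cellUpdate_mid hμ hΔz hB.1 hC.1 hvlip
      (fun x hx y hy hxy => (hDinc x hx y hy hxy).2) hCFLi ha hb₁ hb₂ (hvmax c hc) h
  · exact cellUpdate_le_cellUpdate_right hμ hΔz hC.1 hvmono hDmono hb.1 hc₁ hc₂ h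

/-- monotonicity of the finite-volume update map for the aggregate
volume fraction (Bürger–Diehl–Martí–Vásquez flotation scheme) under the CFL condition.
Cell values `φ_{i-1/2}` are indexed by `i = 1,…,N`; `Ab i` is the boundary area `A_i`
and `Ac i` the cell area `A_{i-1/2}`.  At a fixed time level the flows are
`QUn, QFn, QWn` and the boundary flows `Q i`; `v` is the velocity `ṽ`, `d` the
capillarity density with primitive `D`.  The update map
`K (a,b,c)` is nondecreasing in each argument on `[0,1]³`. -/
theorem stmt10
    (N iF : ℕ) (hN : 3 ≤ N) (hiF : 2 ≤ iF) (hiFN : iF ≤ N - 1)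
    (Δz Δt : ℝ) (hΔz : 0 < Δz) (hΔt : 0 < Δt)
    (Ac Ab : ℕ → ℝ)
    (hAc : ∀ i : ℕ, 1 ≤ i → i ≤ N → 0 < Ac i)
    (hAb : ∀ i : ℕ, i ≤ N → 0 < Ab i)
    (γ δ : ℕ → ℝ)
    (hγ : ∀ i : ℕ, γ i = if 1 ≤ i ∧ i ≤ N - 2 then 1 else 0)
    (hδ : ∀ i : ℕ, δ i = if i = iF then 1 else 0)
    (QUn QFn QWn : ℝ)
    (hQU : 0 ≤ QUn) (hQF : 0 ≤ QFn) (hQW : 0 ≤ QWn)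
    (hQE : 0 ≤ QFn + QWn - QUn)
    (Q : ℕ → ℝ)
    (hQlow : ∀ i : ℕ, i ≤ iF - 1 → Q i = -QUn)
    (hQmid : ∀ i : ℕ, iF ≤ i → i ≤ N - 2 → Q i = QFn - QUn)
    (hQtop : ∀ i : ℕ, N - 1 ≤ i → i ≤ N → Q i = QFn + QWn - QUn)
    (φc : ℝ) (hφc : φc ∈ Set.Ioo (0:ℝ) 1)
    (v : ℝ → ℝ) (Lv vmax : ℝ)
    (hv0 : ∀ u ∈ Set.Icc (0:ℝ) 1, 0 ≤ v u)
    (hvmax : ∀ u ∈ Set.Icc (0:ℝ) 1, v u ≤ vmax)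
    (hvmono : ∀ u₁ ∈ Set.Icc (0:ℝ) 1, ∀ u₂ ∈ Set.Icc (0:ℝ) 1, u₁ ≤ u₂ → v u₂ ≤ v u₁)
    (hvlip : ∀ u₁ ∈ Set.Icc (0:ℝ) 1, ∀ u₂ ∈ Set.Icc (0:ℝ) 1,
      |v u₁ - v u₂| ≤ Lv * |u₁ - u₂|)
    (hv1 : v 1 = 0)
    (d : ℝ → ℝ) (dmax : ℝ) (hdmeas : Measurable d)
    (hd : ∀ s ∈ Set.Icc (0:ℝ) 1, 0 ≤ d s ∧ d s ≤ dmax)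
    (hd0 : ∀ s ∈ Set.Icc (0:ℝ) φc, d s = 0)
    (D : ℝ → ℝ) (hD : ∀ x : ℝ, D x = ∫ s in (0:ℝ)..x, d s)
    (M1 M2 Amin Qbound : ℝ)
    (hM1 : ∀ i : ℕ, 1 ≤ i → i ≤ N → Ab (i - 1) / Ac i ≤ M1 ∧ Ab i / Ac i ≤ M1)
    (hM2 : ∀ i : ℕ, 1 ≤ i → i ≤ N → (Ab (i - 1) + Ab i) / Ac i ≤ M2)
    (hAmin : 0 < Amin)
    (hAminc : ∀ i : ℕ, 1 ≤ i → i ≤ N → Amin ≤ Ac i)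
    (hAminb : ∀ i : ℕ, i ≤ N → Amin ≤ Ab i)
    (hQbound : QFn + QWn ≤ Qbound)
    (hCFL : Δt * (2 * Qbound / Amin + M1 * Lv + M1 * vmax + M2 * dmax / Δz) ≤ Δz)
    (φF : ℝ) (hφF : φF ∈ Set.Icc (0:ℝ) 1)
    (K : ℕ → ℝ → ℝ → ℝ → ℝ)
    (hK : ∀ (i : ℕ) (a b c : ℝ), K i a b c =
      b + (Δt / Δz) / Ac i *
        (a * max (Q (i - 1)) 0 + b * min (Q (i - 1)) 0
          + Ab (i - 1) * γ (i - 1) * (a * v b - (D b - D a) / Δz)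
          - b * max (Q i) 0 - c * min (Q i) 0
          - Ab i * γ i * (b * v c - (D c - D b) / Δz)
          + QFn * φF * δ i)) :
    ∀ i : ℕ, 1 ≤ i → i ≤ N →
      (∀ b ∈ Set.Icc (0:ℝ) 1, ∀ c ∈ Set.Icc (0:ℝ) 1,
        ∀ a₁ ∈ Set.Icc (0:ℝ) 1, ∀ a₂ ∈ Set.Icc (0:ℝ) 1,
          a₁ ≤ a₂ → K i a₁ b c ≤ K i a₂ b c) ∧
      (∀ a ∈ Set.Icc (0:ℝ) 1, ∀ c ∈ Set.Icc (0:ℝ) 1,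
        ∀ b₁ ∈ Set.Icc (0:ℝ) 1, ∀ b₂ ∈ Set.Icc (0:ℝ) 1,
          b₁ ≤ b₂ → K i a b₁ c ≤ K i a b₂ c) ∧
      (∀ a ∈ Set.Icc (0:ℝ) 1, ∀ b ∈ Set.Icc (0:ℝ) 1,
        ∀ c₁ ∈ Set.Icc (0:ℝ) 1, ∀ c₂ ∈ Set.Icc (0:ℝ) 1,
          c₁ ≤ c₂ → K i a b c₁ ≤ K i a b c₂) :=
  stmt10_general N iF Δz Δt hΔz hΔt Ac Ab hAc hAb γ δ hγ QUn QFn QWn hQU hQF hQW hQE Q hQlow hQmid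
    hQtop v Lv vmax hv0 hvmax hvmono hvlip d dmax hdmeas hd D hD M1 M2 Amin Qbound hM1 hM2 hAmin
    hAminc hQbound hCFL φF K hK
end

section
/- Consider the one-step finite-volume scheme for the aggregate volume fraction described in the context, with the ghost convention φ_{−1/2}^n := 0 and φ_{N+1/2}^n := 0, numerical fluxes A_iΦ_i^n := φ_{i−1/2}^n Q_i^{n+} + φ_{i+1/2}^n Q_i^{n−} + A_iγ_i [ φ_{i−1/2}^n ṽ(φ_{i+1/2}^n) − (D(φ_{i+1/2}^n) − D(φ_{i−1/2}^n))/Δz ] for i = 0,…,N, and update φ_{i−1/2}^{n+1} := φ_{i−1/2}^n + (λ/A_{i−1/2}) ( A_{i−1}Φ_{i−1}^n − A_iΦ_i^n + Q_F^n φ_F^n δ_i ) for i = 1,…,N. If the CFL condition holds, φ_F^n ∈ [0,1] for all n, and the initial values satisfy 0 ≤ φ_{i−1/2}^0 ≤ 1 for all i = 1,…,N, then for every time level n ≥ 0 and every i = 1,…,N one has 0 ≤ φ_{i−1/2}^n ≤ 1. -/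
/-!
Each numerical flux is controlled by its two neighbouring cell values: it lies between
`-r K` and `l K`, and, measured from the bulk flow, between `Q - (1 - l) K` and `Q + (1 - r) K`
(the latter because `v` is Lipschitz with `v 1 = 0`, and `0 ≤ D' ≤ ‖d‖∞`). Hence the increment
of a cell `b` is at least `-b K` and at most `(1 - b) K + (Q_{i-1} - Q_i + Q_F φ_F δ_i)`, where
the last bracket is `≤ 0` by the layout of the flows. The CFL condition is exactly what makes
`λ K / A_{i-1/2} ≤ 1`, so `[0, 1]` is invariant.
-/

open Set

theorem intervalIntegrable_of_bounded {d : ℝ → ℝ} {a b M : ℝ} (hmeas : Measurable d)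
    (hd : ∀ s ∈ Icc a b, 0 ≤ d s ∧ d s ≤ M) {x y : ℝ} (hx : x ∈ Icc a b) (hy : y ∈ Icc a b) :
    IntervalIntegrable d MeasureTheory.volume x y := by
  refine (intervalIntegrable_const (c := M)).mono_fun' hmeas.aestronglyMeasurable ?_
  refine (MeasureTheory.ae_restrict_iff' measurableSet_uIoc).2 (.of_forall fun s hs => ?_)
  have hs' : s ∈ Icc a b := uIcc_subset_Icc hx hy (uIoc_subset_uIcc hs)
  show ‖d s‖ ≤ M
  rw [Real.norm_of_nonneg (hd s hs').1]
  exact (hd s hs').2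

theorem integral_sub_integral_mem_Icc {d : ℝ → ℝ} {a b M : ℝ} (hmeas : Measurable d)
    (hd : ∀ s ∈ Icc a b, 0 ≤ d s ∧ d s ≤ M) {x y : ℝ} (hx : a ≤ x) (hxy : x ≤ y) (hy : y ≤ b) :
    (∫ s in a..y, d s) - ∫ s in a..x, d s ∈ Icc 0 (M * (y - x)) := by
  have mem : ∀ t, a ≤ t → t ≤ b → t ∈ Icc a b := fun t h₁ h₂ => ⟨h₁, h₂⟩
  have hx' := mem x hx (hxy.trans hy)
  have hy' := mem y (hx.trans hxy) hy
  have ha' := mem a le_rfl (hx.trans (hxy.trans hy))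
  rw [intervalIntegral.integral_interval_sub_left (intervalIntegrable_of_bounded hmeas hd ha' hy')
    (intervalIntegrable_of_bounded hmeas hd ha' hx')]
  have hd' : ∀ s ∈ Icc x y, 0 ≤ d s ∧ d s ≤ M := fun s hs =>
    hd s ⟨hx.trans hs.1, hs.2.trans hy⟩
  refine ⟨intervalIntegral.integral_nonneg hxy fun s hs => (hd' s hs).1, ?_⟩
  calc (∫ s in x..y, d s) ≤ ∫ _ in x..y, M :=
        intervalIntegral.integral_mono_on hxy (intervalIntegrable_of_bounded hmeas hd hx' hy')
          intervalIntegrable_const fun s hs => (hd' s hs).2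
    _ = M * (y - x) := by rw [intervalIntegral.integral_const, smul_eq_mul, mul_comm]

theorem max_zero_mem_Icc_abs (Q : ℝ) : max Q 0 ∈ Icc 0 |Q| :=
  ⟨le_max_right _ _, max_le (le_abs_self Q) (abs_nonneg Q)⟩

theorem min_zero_mem_Icc_neg_abs (Q : ℝ) : min Q 0 ∈ Icc (-|Q|) 0 :=
  ⟨le_min (neg_abs_le Q) (neg_nonpos.2 (abs_nonneg Q)), min_le_right _ _⟩

/-- The paper's `A_i Φ_i`, with `Q = Q_i`, `k = A_i γ_i`, `l = φ_{i-1/2}` and `r = φ_{i+1/2}`. -/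
noncomputable def numFlux (v D : ℝ → ℝ) (Δz Q k l r : ℝ) : ℝ :=
  l * max Q 0 + r * min Q 0 + k * (l * v r - (D r - D l) / Δz)

section numFlux

variable {v D : ℝ → ℝ} {Δz Q k l r Lv vmax dmax : ℝ}

theorem neg_mul_le_numFlux (hΔz : 0 < Δz) (hk : 0 ≤ k) (hl : 0 ≤ l) (hr : 0 ≤ r)
    (hv : 0 ≤ v r) (hD : D r - D l ≤ dmax * r) :
    -(r * (|Q| + k * (dmax / Δz))) ≤ numFlux v D Δz Q k l r := by
  obtain ⟨hp₀, -⟩ := max_zero_mem_Icc_abs Q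
  obtain ⟨hm, -⟩ := min_zero_mem_Icc_neg_abs Q
  have hw : (D r - D l) / Δz ≤ dmax / Δz * r := by rw [div_mul_eq_mul_div]; gcongr
  unfold numFlux
  generalize (D r - D l) / Δz = w at *
  linarith [mul_nonneg hl hp₀, mul_le_mul_of_nonneg_left hm hr, mul_nonneg hk (mul_nonneg hl hv),
    mul_le_mul_of_nonneg_left hw hk]

theorem numFlux_le_mul (hΔz : 0 < Δz) (hk : 0 ≤ k) (hl : 0 ≤ l) (hr : 0 ≤ r)
    (hv : v r ≤ vmax) (hD : D l - D r ≤ dmax * l) :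
    numFlux v D Δz Q k l r ≤ l * (|Q| + k * (vmax + dmax / Δz)) := by
  obtain ⟨-, hp⟩ := max_zero_mem_Icc_abs Q
  obtain ⟨-, hm₀⟩ := min_zero_mem_Icc_neg_abs Q
  have hw : -((D r - D l) / Δz) ≤ dmax / Δz * l := by
    rw [← neg_div, div_mul_eq_mul_div]; gcongr; linarith
  unfold numFlux
  generalize (D r - D l) / Δz = w at *
  linarith [mul_le_mul_of_nonneg_left hp hl, mul_nonpos_of_nonneg_of_nonpos hr hm₀,
    mul_le_mul_of_nonneg_left hv (mul_nonneg hk hl), mul_le_mul_of_nonneg_left hw hk]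

theorem numFlux_le_add (hΔz : 0 < Δz) (hk : 0 ≤ k) (hl : l ≤ 1) (hr : r ≤ 1) (hv₀ : 0 ≤ v r)
    (hv : v r ≤ Lv * (1 - r)) (hD : D l - D r ≤ dmax * (1 - r)) :
    numFlux v D Δz Q k l r ≤ Q + (1 - r) * (|Q| + k * (Lv + dmax / Δz)) := by
  obtain ⟨hp₀, -⟩ := max_zero_mem_Icc_abs Q
  obtain ⟨hm, -⟩ := min_zero_mem_Icc_neg_abs Q
  have hQ : max Q 0 + min Q 0 = Q := by rw [max_add_min, add_zero]
  have hw : -((D r - D l) / Δz) ≤ dmax / Δz * (1 - r) := by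
    rw [← neg_div, div_mul_eq_mul_div]; gcongr; linarith
  unfold numFlux
  generalize (D r - D l) / Δz = w at *
  linarith [mul_nonneg (sub_nonneg.2 hl) hp₀, mul_le_mul_of_nonneg_left hm (sub_nonneg.2 hr),
    mul_le_mul_of_nonneg_left (mul_le_of_le_one_left hv₀ hl |>.trans hv) hk,
    mul_le_mul_of_nonneg_left hw hk]

theorem sub_mul_le_numFlux (hΔz : 0 < Δz) (hk : 0 ≤ k) (hl : l ∈ Icc 0 1) (hr : r ≤ 1)
    (hv₀ : 0 ≤ v r) (hD : D r - D l ≤ dmax * (1 - l)) :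
    Q - (1 - l) * (|Q| + k * (dmax / Δz)) ≤ numFlux v D Δz Q k l r := by
  obtain ⟨-, hp⟩ := max_zero_mem_Icc_abs Q
  obtain ⟨-, hm₀⟩ := min_zero_mem_Icc_neg_abs Q
  have hQ : max Q 0 + min Q 0 = Q := by rw [max_add_min, add_zero]
  have hw : (D r - D l) / Δz ≤ dmax / Δz * (1 - l) := by rw [div_mul_eq_mul_div]; gcongr
  unfold numFlux
  generalize (D r - D l) / Δz = w at *
  linarith [mul_le_mul_of_nonneg_left hp (sub_nonneg.2 hl.2),
    mul_nonpos_of_nonneg_of_nonpos (sub_nonneg.2 hr) hm₀,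
    mul_nonneg hk (mul_nonneg hl.1 hv₀), mul_le_mul_of_nonneg_left hw hk]

theorem sub_le_of_increment_mem_Icc
    (hD : ∀ x y, 0 ≤ x → x ≤ y → y ≤ 1 → D y - D x ∈ Icc 0 (dmax * (y - x)))
    {x y : ℝ} (hx : x ∈ Icc 0 1) (hy : y ∈ Icc 0 1) :
    D y - D x ≤ dmax * y ∧ D y - D x ≤ dmax * (1 - x) := by
  have h0x := hD 0 x le_rfl hx.1 hx.2
  have h0y := hD 0 y le_rfl hy.1 hy.2
  have hx1 := hD x 1 hx.1 hx.2 le_rfl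
  have hy1 := hD y 1 hy.1 hy.2 le_rfl
  constructor
  · linarith [h0x.1, h0y.2]
  · linarith [hx1.2, hy1.1]

theorem add_mul_numFlux_sub_numFlux_mem_Icc (hv₀ : ∀ u ∈ Icc (0:ℝ) 1, 0 ≤ v u)
    (hvmax : ∀ u ∈ Icc (0:ℝ) 1, v u ≤ vmax) (hvlip : ∀ u ∈ Icc (0:ℝ) 1, v u ≤ Lv * (1 - u))
    (hD : ∀ x y, 0 ≤ x → x ≤ y → y ≤ 1 → D y - D x ∈ Icc 0 (dmax * (y - x))) (hΔz : 0 < Δz)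
    {a b c Ql Qr kl kr S μ : ℝ} (ha : a ∈ Icc 0 1) (hb : b ∈ Icc 0 1) (hc : c ∈ Icc 0 1)
    (hkl : 0 ≤ kl) (hkr : 0 ≤ kr) (hS : 0 ≤ S) (hbal : Ql - Qr + S ≤ 0) (hμ : 0 ≤ μ)
    (hCFL : μ * (|Ql| + |Qr| + kl * Lv + kr * vmax + (kl + kr) * (dmax / Δz)) ≤ 1) :
    b + μ * (numFlux v D Δz Ql kl a b - numFlux v D Δz Qr kr b c + S) ∈ Icc 0 1 := by
  have h0 : (0:ℝ) ∈ Icc 0 1 := ⟨le_rfl, zero_le_one⟩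
  have hLv : 0 ≤ Lv := by simpa using (hv₀ 0 h0).trans (hvlip 0 h0)
  have hvmax₀ : 0 ≤ vmax := (hv₀ 0 h0).trans (hvmax 0 h0)
  set K := |Ql| + |Qr| + kl * Lv + kr * vmax + (kl + kr) * (dmax / Δz)
  set E := numFlux v D Δz Ql kl a b - numFlux v D Δz Qr kr b c + S
  have hDab := sub_le_of_increment_mem_Icc hD ha hb
  have hDba := sub_le_of_increment_mem_Icc hD hb ha
  have hDbc := sub_le_of_increment_mem_Icc hD hb hc
  have hDcb := sub_le_of_increment_mem_Icc hD hc hb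
  have hE_ge : -(b * K) ≤ E := by
    have hl := neg_mul_le_numFlux (Q := Ql) hΔz hkl ha.1 hb.1 (hv₀ b hb) hDab.1
    have hr := numFlux_le_mul (Q := Qr) hΔz hkr hb.1 hc.1 (hvmax c hc) hDcb.1
    linarith [mul_nonneg hb.1 (mul_nonneg hkl hLv)]
  have hE_le : E ≤ (1 - b) * K := by
    have hl := numFlux_le_add (Q := Ql) hΔz hkl ha.2 hb.2 (hv₀ b hb) (hvlip b hb) hDba.2
    have hr := sub_mul_le_numFlux (Q := Qr) hΔz hkr hb hc.2 (hv₀ c hc) hDbc.2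
    linarith [mul_nonneg (sub_nonneg.2 hb.2) (mul_nonneg hkr hvmax₀)]
  constructor
  · linarith [mul_le_mul_of_nonneg_left hE_ge hμ, mul_le_mul_of_nonneg_left hCFL hb.1]
  · linarith [mul_le_mul_of_nonneg_left hE_le hμ,
      mul_le_mul_of_nonneg_left hCFL (sub_nonneg.2 hb.2)]

end numFlux

theorem courant_number_le_one {Δt Δz Ac Amin Al Ar kl kr Ql Qr Qb Lv vmax dmax M1 M2 : ℝ}
    (hΔt : 0 ≤ Δt) (hΔz : 0 < Δz) (hAmin : 0 < Amin) (hAminc : Amin ≤ Ac)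
    (hQl : |Ql| ≤ Qb) (hQr : |Qr| ≤ Qb) (hkl : kl ≤ Al) (hkr : kr ≤ Ar)
    (hLv : 0 ≤ Lv) (hvmax : 0 ≤ vmax) (hdmax : 0 ≤ dmax)
    (hM1l : Al / Ac ≤ M1) (hM1r : Ar / Ac ≤ M1) (hM2 : (Al + Ar) / Ac ≤ M2)
    (hCFL : Δt * (2 * Qb / Amin + M1 * Lv + M1 * vmax + M2 * dmax / Δz) ≤ Δz) :
    Δt / Δz / Ac * (|Ql| + |Qr| + kl * Lv + kr * vmax + (kl + kr) * (dmax / Δz)) ≤ 1 := by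
  have hAc : 0 < Ac := hAmin.trans_le hAminc
  have hQb : 2 * Qb ≤ Ac * (2 * Qb / Amin) := by
    rw [mul_div_assoc', le_div_iff₀ hAmin]
    nlinarith [(abs_nonneg Ql).trans hQl]
  have hAl : Al ≤ Ac * M1 := by rwa [div_le_iff₀' hAc] at hM1l
  have hAr : Ar ≤ Ac * M1 := by rwa [div_le_iff₀' hAc] at hM1r
  have hAlr : Al + Ar ≤ Ac * M2 := by rwa [div_le_iff₀' hAc] at hM2
  have hdz : 0 ≤ dmax / Δz := div_nonneg hdmax hΔz.le
  calc Δt / Δz / Ac * (|Ql| + |Qr| + kl * Lv + kr * vmax + (kl + kr) * (dmax / Δz))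
      ≤ Δt / Δz / Ac * (Ac * (2 * Qb / Amin + M1 * Lv + M1 * vmax + M2 * dmax / Δz)) := by
        gcongr ?_ * ?_
        rw [mul_div_assoc M2]
        linarith [mul_le_mul_of_nonneg_right (hkl.trans hAl) hLv,
          mul_le_mul_of_nonneg_right (hkr.trans hAr) hvmax,
          mul_le_mul_of_nonneg_right ((add_le_add hkl hkr).trans hAlr) hdz]
    _ = Δt * (2 * Qb / Amin + M1 * Lv + M1 * vmax + M2 * dmax / Δz) / Δz := by
        field_simp
    _ ≤ 1 := (div_le_one hΔz).2 hCFL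

theorem abs_flow_le {N iF : ℕ} {QU QF QW : ℝ} {Q : ℕ → ℝ} (hQU : 0 ≤ QU) (hQF : 0 ≤ QF)
    (hQW : 0 ≤ QW) (hQE : 0 ≤ QF + QW - QU) (hQlow : ∀ i, i ≤ iF - 1 → Q i = -QU)
    (hQmid : ∀ i, iF ≤ i → i ≤ N - 2 → Q i = QF - QU)
    (hQtop : ∀ i, N - 1 ≤ i → i ≤ N → Q i = QF + QW - QU) {j : ℕ} (hj : j ≤ N) :
    |Q j| ≤ QF + QW := by
  rw [abs_le]
  by_cases hlow : j ≤ iF - 1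
  · rw [hQlow j hlow]; constructor <;> linarith
  by_cases hmid : j ≤ N - 2
  · rw [hQmid j (by omega) hmid]; constructor <;> linarith
  · rw [hQtop j (by omega) hj]; constructor <;> linarith

theorem flow_sub_flow_add_feed_nonpos {N iF : ℕ} {QU QF QW φF : ℝ} {Q δ : ℕ → ℝ}
    (hQF : 0 ≤ QF) (hQW : 0 ≤ QW) (hφF : φF ≤ 1) (hQlow : ∀ i, i ≤ iF - 1 → Q i = -QU)
    (hQmid : ∀ i, iF ≤ i → i ≤ N - 2 → Q i = QF - QU)
    (hQtop : ∀ i, N - 1 ≤ i → i ≤ N → Q i = QF + QW - QU)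
    (hδ : ∀ i, δ i = if i = iF then 1 else 0) {i : ℕ} (hi : 1 ≤ i) (hiN : i ≤ N) :
    Q (i - 1) - Q i + QF * φF * δ i ≤ 0 := by
  have hfeed : QF * φF ≤ QF := mul_le_of_le_one_right hQF hφF
  rw [hδ i]
  by_cases hlow : i ≤ iF - 1
  · rw [hQlow (i - 1) (by omega), hQlow i hlow, if_neg (by omega)]; simp
  rcases eq_or_ne i iF with rfl | hne
  · rw [hQlow (i - 1) (by omega), if_pos rfl]
    by_cases hmid : i ≤ N - 2
    · rw [hQmid i le_rfl hmid]; linarith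
    · rw [hQtop i (by omega) hiN]; linarith
  rw [if_neg hne, mul_zero, add_zero]
  by_cases hmid : i ≤ N - 2
  · rw [hQmid (i - 1) (by omega) (by omega), hQmid i (by omega) hmid, sub_self]
  by_cases hmid' : i - 1 ≤ N - 2
  · rw [hQmid (i - 1) (by omega) hmid', hQtop i (by omega) hiN]; linarith
  · rw [hQtop (i - 1) (by omega) (by omega), hQtop i (by omega) hiN, sub_self]

theorem forall_mem_of_ghost_step {α : Type*} {N : ℕ} {s : Set α} {φ : ℕ → ℕ → α}
    (hghost0 : ∀ n, φ n 0 ∈ s) (hghostN : ∀ n, φ n (N + 1) ∈ s)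
    (hinit : ∀ i, 1 ≤ i → i ≤ N → φ 0 i ∈ s)
    (hstep : ∀ n i, 1 ≤ i → i ≤ N → (∀ j, j ≤ N + 1 → φ n j ∈ s) → φ (n + 1) i ∈ s) :
    ∀ n i, 1 ≤ i → i ≤ N → φ n i ∈ s := by
  intro n
  induction n with
  | zero => exact hinit
  | succ n ih =>
    refine fun i hi hiN => hstep n i hi hiN fun j hj => ?_
    rcases Nat.eq_zero_or_pos j with rfl | hj0
    · exact hghost0 n
    rcases hj.lt_or_eq with hjN | rfl
    · exact ih j hj0 (by omega)
    · exact hghostN n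

/-- Cell values `φ_{i-1/2}^n` are stored as `φ n i` for `i = 1,…,N`, with ghost
values `φ n 0 = φ n (N+1) = 0`; `Ab i` is the boundary area `A_i` and `Ac i` the cell
area `A_{i-1/2}`. -/
theorem stmt11_general
    (N iF : ℕ)
    (Δz Δt : ℝ) (hΔz : 0 < Δz) (hΔt : 0 < Δt)
    (Ac Ab : ℕ → ℝ)
    (hAc : ∀ i : ℕ, 1 ≤ i → i ≤ N → 0 < Ac i)
    (hAb : ∀ i : ℕ, i ≤ N → 0 < Ab i)
    (γ δ : ℕ → ℝ)
    (hγ : ∀ i : ℕ, γ i = if 1 ≤ i ∧ i ≤ N - 2 then 1 else 0)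
    (hδ : ∀ i : ℕ, δ i = if i = iF then 1 else 0)
    (QU QF QW : ℕ → ℝ)
    (hQU : ∀ n : ℕ, 0 ≤ QU n) (hQF : ∀ n : ℕ, 0 ≤ QF n) (hQW : ∀ n : ℕ, 0 ≤ QW n)
    (hQE : ∀ n : ℕ, 0 ≤ QF n + QW n - QU n)
    (Q : ℕ → ℕ → ℝ)
    (hQlow : ∀ (n i : ℕ), i ≤ iF - 1 → Q n i = -QU n)
    (hQmid : ∀ (n i : ℕ), iF ≤ i → i ≤ N - 2 → Q n i = QF n - QU n)
    (hQtop : ∀ (n i : ℕ), N - 1 ≤ i → i ≤ N → Q n i = QF n + QW n - QU n)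
    (v : ℝ → ℝ) (Lv vmax : ℝ)
    (hv0 : ∀ u ∈ Set.Icc (0:ℝ) 1, 0 ≤ v u)
    (hvmax : ∀ u ∈ Set.Icc (0:ℝ) 1, v u ≤ vmax)
    (hvlip : ∀ u₁ ∈ Set.Icc (0:ℝ) 1, ∀ u₂ ∈ Set.Icc (0:ℝ) 1,
      |v u₁ - v u₂| ≤ Lv * |u₁ - u₂|)
    (hv1 : v 1 = 0)
    (d : ℝ → ℝ) (dmax : ℝ) (hdmeas : Measurable d)
    (hd : ∀ s ∈ Set.Icc (0:ℝ) 1, 0 ≤ d s ∧ d s ≤ dmax)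
    (D : ℝ → ℝ) (hD : ∀ x : ℝ, D x = ∫ s in (0:ℝ)..x, d s)
    (M1 M2 Amin Qbound : ℝ)
    (hM1 : ∀ i : ℕ, 1 ≤ i → i ≤ N → Ab (i - 1) / Ac i ≤ M1 ∧ Ab i / Ac i ≤ M1)
    (hM2 : ∀ i : ℕ, 1 ≤ i → i ≤ N → (Ab (i - 1) + Ab i) / Ac i ≤ M2)
    (hAmin : 0 < Amin)
    (hAminc : ∀ i : ℕ, 1 ≤ i → i ≤ N → Amin ≤ Ac i)
    (hQbound : ∀ n : ℕ, QF n + QW n ≤ Qbound)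
    (hCFL : Δt * (2 * Qbound / Amin + M1 * Lv + M1 * vmax + M2 * dmax / Δz) ≤ Δz)
    (φF : ℕ → ℝ) (hφF : ∀ n : ℕ, φF n ∈ Set.Icc (0:ℝ) 1)
    (φ : ℕ → ℕ → ℝ)
    (hghost0 : ∀ n : ℕ, φ n 0 = 0) (hghostN : ∀ n : ℕ, φ n (N + 1) = 0)
    (hupdate : ∀ (n i : ℕ), 1 ≤ i → i ≤ N →
      φ (n + 1) i = φ n i + (Δt / Δz) / Ac i *
        ((φ n (i - 1) * max (Q n (i - 1)) 0 + φ n i * min (Q n (i - 1)) 0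
            + Ab (i - 1) * γ (i - 1) *
              (φ n (i - 1) * v (φ n i) - (D (φ n i) - D (φ n (i - 1))) / Δz))
          - (φ n i * max (Q n i) 0 + φ n (i + 1) * min (Q n i) 0
            + Ab i * γ i *
              (φ n i * v (φ n (i + 1)) - (D (φ n (i + 1)) - D (φ n i)) / Δz))
          + QF n * φF n * δ i))
    (hinit : ∀ i : ℕ, 1 ≤ i → i ≤ N → φ 0 i ∈ Set.Icc (0:ℝ) 1) :
    ∀ (n i : ℕ), 1 ≤ i → i ≤ N → φ n i ∈ Set.Icc (0:ℝ) 1 := by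
  have h0 : (0:ℝ) ∈ Icc 0 1 := ⟨le_rfl, zero_le_one⟩
  have hvlip' : ∀ u ∈ Icc (0:ℝ) 1, v u ≤ Lv * (1 - u) := fun u hu => by
    simpa [hv1, abs_of_nonneg (hv0 u hu), abs_of_nonpos (sub_nonpos.2 hu.2)] using
      hvlip u hu 1 ⟨zero_le_one, le_rfl⟩
  have hDinc : ∀ x y, 0 ≤ x → x ≤ y → y ≤ 1 → D y - D x ∈ Icc 0 (dmax * (y - x)) :=
    fun x y hx hxy hy => by
      simpa only [hD] using integral_sub_integral_mem_Icc hdmeas hd hx hxy hy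
  have hQ : ∀ n j, j ≤ N → |Q n j| ≤ Qbound := fun n j hj =>
    (abs_flow_le (hQU n) (hQF n) (hQW n) (hQE n) (hQlow n) (hQmid n) (hQtop n) hj).trans
      (hQbound n)
  have hk : ∀ j, j ≤ N → 0 ≤ Ab j * γ j ∧ Ab j * γ j ≤ Ab j := fun j hj => by
    rw [hγ j]; split_ifs <;> simp [(hAb j hj).le]
  have hδ₀ : ∀ j, 0 ≤ δ j := fun j => by rw [hδ j]; split_ifs <;> norm_num
  have hLv : 0 ≤ Lv := by simpa using (hv0 0 h0).trans (hvlip' 0 h0)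
  refine forall_mem_of_ghost_step (fun n => (hghost0 n).symm ▸ h0)
    (fun n => (hghostN n).symm ▸ h0) hinit fun n i hi hiN hφ => ?_
  rw [hupdate n i hi hiN]
  exact add_mul_numFlux_sub_numFlux_mem_Icc hv0 hvmax hvlip' hDinc hΔz
    (hφ _ (by omega)) (hφ _ (by omega)) (hφ _ (by omega)) (hk _ (by omega)).1 (hk i hiN).1
    (mul_nonneg (mul_nonneg (hQF n) (hφF n).1) (hδ₀ i))
    (flow_sub_flow_add_feed_nonpos (hQF n) (hQW n) (hφF n).2 (hQlow n) (hQmid n) (hQtop n)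
      hδ hi hiN)
    (div_nonneg (div_nonneg hΔt.le hΔz.le) (hAc i hi hiN).le)
    (courant_number_le_one hΔt.le hΔz hAmin (hAminc i hi hiN) (hQ n _ (by omega)) (hQ n i hiN)
      (hk _ (by omega)).2 (hk i hiN).2 hLv ((hv0 0 h0).trans (hvmax 0 h0))
      ((hd 0 h0).1.trans (hd 0 h0).2) (hM1 i hi hiN).1 (hM1 i hi hiN).2 (hM2 i hi hiN) hCFL)

/-- invariant region `0 ≤ φ ≤ 1` for the finite-volume scheme for the
aggregate volume fraction (Bürger–Diehl–Martí–Vásquez flotation scheme) under the CFL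
condition.  Cell values `φ_{i-1/2}^n` are stored as `φ n i` for `i = 1,…,N`, with ghost
values `φ n 0 = φ n (N+1) = 0`; `Ab i` is the boundary area `A_i` and `Ac i` the cell
area `A_{i-1/2}`. -/
theorem stmt11
    (N iF : ℕ) (hN : 3 ≤ N) (hiF : 2 ≤ iF) (hiFN : iF ≤ N - 1)
    (Δz Δt : ℝ) (hΔz : 0 < Δz) (hΔt : 0 < Δt)
    (Ac Ab : ℕ → ℝ)
    (hAc : ∀ i : ℕ, 1 ≤ i → i ≤ N → 0 < Ac i)
    (hAb : ∀ i : ℕ, i ≤ N → 0 < Ab i)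
    (γ δ : ℕ → ℝ)
    (hγ : ∀ i : ℕ, γ i = if 1 ≤ i ∧ i ≤ N - 2 then 1 else 0)
    (hδ : ∀ i : ℕ, δ i = if i = iF then 1 else 0)
    (QU QF QW : ℕ → ℝ)
    (hQU : ∀ n : ℕ, 0 ≤ QU n) (hQF : ∀ n : ℕ, 0 ≤ QF n) (hQW : ∀ n : ℕ, 0 ≤ QW n)
    (hQE : ∀ n : ℕ, 0 ≤ QF n + QW n - QU n)
    (Q : ℕ → ℕ → ℝ)
    (hQlow : ∀ (n i : ℕ), i ≤ iF - 1 → Q n i = -QU n)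
    (hQmid : ∀ (n i : ℕ), iF ≤ i → i ≤ N - 2 → Q n i = QF n - QU n)
    (hQtop : ∀ (n i : ℕ), N - 1 ≤ i → i ≤ N → Q n i = QF n + QW n - QU n)
    (φc : ℝ) (hφc : φc ∈ Set.Ioo (0:ℝ) 1)
    (v : ℝ → ℝ) (Lv vmax : ℝ)
    (hv0 : ∀ u ∈ Set.Icc (0:ℝ) 1, 0 ≤ v u)
    (hvmax : ∀ u ∈ Set.Icc (0:ℝ) 1, v u ≤ vmax)
    (hvmono : ∀ u₁ ∈ Set.Icc (0:ℝ) 1, ∀ u₂ ∈ Set.Icc (0:ℝ) 1, u₁ ≤ u₂ → v u₂ ≤ v u₁)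
    (hvlip : ∀ u₁ ∈ Set.Icc (0:ℝ) 1, ∀ u₂ ∈ Set.Icc (0:ℝ) 1,
      |v u₁ - v u₂| ≤ Lv * |u₁ - u₂|)
    (hv1 : v 1 = 0)
    (d : ℝ → ℝ) (dmax : ℝ) (hdmeas : Measurable d)
    (hd : ∀ s ∈ Set.Icc (0:ℝ) 1, 0 ≤ d s ∧ d s ≤ dmax)
    (hd0 : ∀ s ∈ Set.Icc (0:ℝ) φc, d s = 0)
    (D : ℝ → ℝ) (hD : ∀ x : ℝ, D x = ∫ s in (0:ℝ)..x, d s)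
    (M1 M2 Amin Qbound : ℝ)
    (hM1 : ∀ i : ℕ, 1 ≤ i → i ≤ N → Ab (i - 1) / Ac i ≤ M1 ∧ Ab i / Ac i ≤ M1)
    (hM2 : ∀ i : ℕ, 1 ≤ i → i ≤ N → (Ab (i - 1) + Ab i) / Ac i ≤ M2)
    (hAmin : 0 < Amin)
    (hAminc : ∀ i : ℕ, 1 ≤ i → i ≤ N → Amin ≤ Ac i)
    (hAminb : ∀ i : ℕ, i ≤ N → Amin ≤ Ab i)
    (hQbound : ∀ n : ℕ, QF n + QW n ≤ Qbound)
    (hCFL : Δt * (2 * Qbound / Amin + M1 * Lv + M1 * vmax + M2 * dmax / Δz) ≤ Δz)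
    (φF : ℕ → ℝ) (hφF : ∀ n : ℕ, φF n ∈ Set.Icc (0:ℝ) 1)
    (φ : ℕ → ℕ → ℝ)
    (hghost0 : ∀ n : ℕ, φ n 0 = 0) (hghostN : ∀ n : ℕ, φ n (N + 1) = 0)
    (hupdate : ∀ (n i : ℕ), 1 ≤ i → i ≤ N →
      φ (n + 1) i = φ n i + (Δt / Δz) / Ac i *
        ((φ n (i - 1) * max (Q n (i - 1)) 0 + φ n i * min (Q n (i - 1)) 0
            + Ab (i - 1) * γ (i - 1) *
              (φ n (i - 1) * v (φ n i) - (D (φ n i) - D (φ n (i - 1))) / Δz))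
          - (φ n i * max (Q n i) 0 + φ n (i + 1) * min (Q n i) 0
            + Ab i * γ i *
              (φ n i * v (φ n (i + 1)) - (D (φ n (i + 1)) - D (φ n i)) / Δz))
          + QF n * φF n * δ i))
    (hinit : ∀ i : ℕ, 1 ≤ i → i ≤ N → φ 0 i ∈ Set.Icc (0:ℝ) 1) :
    ∀ (n i : ℕ), 1 ≤ i → i ≤ N → φ n i ∈ Set.Icc (0:ℝ) 1 :=
  stmt11_general N iF Δz Δt hΔz hΔt Ac Ab hAc hAb γ δ hγ hδ QU QF QW hQU hQF hQW hQE Q hQlow hQmid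
    hQtop v Lv vmax hv0 hvmax hvlip hv1 d dmax hdmeas hd D hD M1 M2 Amin Qbound hM1 hM2 hAmin hAminc
    hQbound hCFL φF hφF φ hghost0 hghostN hupdate hinit
end
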